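/- Let q : ℝ² × [0,T*) → ℝ and ψ : ℝ² × [0,T*) → ℝ be C¹ functions satisfying ∂_t q + ∇^⊥ψ · ∇_x q = 0. Let φ₁, φ₂ : [a,b] × [0,T*) → ℝ be C¹ graph parameterizations of two level curves of q (q(x₁, φᵢ(x₁,t), t) constant for each i) with φ₂ > φ₁ and ∂q/∂x₂ ≠ 0 along both curves, undergoing semi-uniform collapse with constant c > 0. Suppose also that there is M > 0 such that |ψ(z₁,t) − ψ(z₂,t)| ≤ M |z₁ − z₂| · |log|z₁ − z₂|| whenever 0 < |z₁ − z₂| ≤ 1/2 and t ∈ [0,T*), and that the mean thickness A(t) = (b−a)^{−1} ∫_a^b [φ₂(x₁,t) − φ₁(x₁,t)] dx₁ satisfies 0 < A(t) < c/(2e) for all t. Then there is a constant C, depending only on c, such that |A'(t)| ≤ (C M/(b−a)) · A(t) · |log A(t)| for all t ∈ [0,T*). -/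

import Mathlib

open MeasureTheory

/-- The point `(x₁, x₂) ∈ ℝ²`. -/
noncomputable def pt (x₁ x₂ : ℝ) : EuclideanSpace ℝ (Fin 2) := WithLp.toLp 2 ![x₁, x₂]

/-- The time interval `[0, T*)`, where `T*` may be `∞`. -/
def timeDom (Tstar : EReal) : Set ℝ := {t : ℝ | 0 ≤ t ∧ (t : EReal) < Tstar}

open Set

noncomputable def Lam : ℝ × ℝ →L[ℝ] EuclideanSpace ℝ (Fin 2) :=
  (ContinuousLinearMap.fst ℝ ℝ ℝ).smulRight (EuclideanSpace.single 0 1)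
  + (ContinuousLinearMap.snd ℝ ℝ ℝ).smulRight (EuclideanSpace.single 1 1)

lemma pt_eq (x y : ℝ) :
    pt x y = x • EuclideanSpace.single (0 : Fin 2) (1:ℝ)
      + y • EuclideanSpace.single (1 : Fin 2) (1:ℝ) := by
  ext i
  fin_cases i <;>
    simp [pt, EuclideanSpace.single_apply, PiLp.add_apply, PiLp.smul_apply]

lemma Lam_apply (x y : ℝ) : Lam (x, y) = pt x y := by
  simp only [Lam, ContinuousLinearMap.add_apply, ContinuousLinearMap.smulRight_apply,
    ContinuousLinearMap.coe_fst', ContinuousLinearMap.coe_snd', pt_eq]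

lemma dist_pt (x u v : ℝ) : dist (pt x u) (pt x v) = |u - v| := by
  rw [EuclideanSpace.dist_eq, Fin.sum_univ_two]
  simp only [pt, Matrix.cons_val_zero, Matrix.cons_val_one, Matrix.head_cons, sub_self]
  simp [Real.dist_eq, Real.sqrt_sq_eq_abs, sq_abs]

lemma key_lemma (Tstar : EReal)
    (q ψ : EuclideanSpace ℝ (Fin 2) → ℝ → ℝ)
    (hq : ContDiffOn ℝ 1 (fun p : EuclideanSpace ℝ (Fin 2) × ℝ => q p.1 p.2)
      (Set.univ ×ˢ timeDom Tstar))
    (hψ : ContDiffOn ℝ 1 (fun p : EuclideanSpace ℝ (Fin 2) × ℝ => ψ p.1 p.2)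
      (Set.univ ×ˢ timeDom Tstar))
    (htransport : ∀ (x : EuclideanSpace ℝ (Fin 2)), ∀ t ∈ timeDom Tstar,
      derivWithin (fun s => q x s) (timeDom Tstar) t
        + (-(fderiv ℝ (fun z => ψ z t) x (EuclideanSpace.single 1 1)))
            * fderiv ℝ (fun z => q z t) x (EuclideanSpace.single 0 1)
        + (fderiv ℝ (fun z => ψ z t) x (EuclideanSpace.single 0 1))
            * fderiv ℝ (fun z => q z t) x (EuclideanSpace.single 1 1) = 0)
    (a b : ℝ) (hab : a < b) (φ : ℝ → ℝ → ℝ) (K : ℝ)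
    (hφ : ContDiffOn ℝ 1 (fun p : ℝ × ℝ => φ p.1 p.2) (Set.Icc a b ×ˢ timeDom Tstar))
    (hlev : ∀ x₁ ∈ Set.Icc a b, ∀ t ∈ timeDom Tstar, q (pt x₁ (φ x₁ t)) t = K)
    (hnd : ∀ x₁ ∈ Set.Icc a b, ∀ t ∈ timeDom Tstar,
      fderiv ℝ (fun z => q z t) (pt x₁ (φ x₁ t)) (EuclideanSpace.single 1 1) ≠ 0)
    (hDuniq : UniqueDiffOn ℝ (timeDom Tstar)) :
    ∃ F : ℝ → ℝ → ℝ,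
      ContinuousOn (fun p : ℝ × ℝ => F p.1 p.2) (Set.Icc a b ×ˢ timeDom Tstar) ∧
      ∀ t ∈ timeDom Tstar, ∀ x ∈ Set.Icc a b,
        HasDerivWithinAt (fun s => φ x s) (F x t) (timeDom Tstar) t ∧
        HasDerivWithinAt (fun y => ψ (pt y (φ y t)) t) (F x t) (Set.Icc a b) x := by
  classical
  set D := timeDom Tstar with hD
  set SD : Set (ℝ × ℝ) := Set.Icc a b ×ˢ D with hSD
  set UD : Set (EuclideanSpace ℝ (Fin 2) × ℝ) := Set.univ ×ˢ D with hUD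
  have hSDuniq : UniqueDiffOn ℝ SD := (uniqueDiffOn_Icc hab).prod hDuniq
  have hUDuniq : UniqueDiffOn ℝ UD := uniqueDiffOn_univ.prod hDuniq
  set F : ℝ → ℝ → ℝ := fun x t =>
    fderivWithin ℝ (fun p : ℝ × ℝ => φ p.1 p.2) SD (x, t) (0, 1) with hF
  refine ⟨F, ?_, ?_⟩
  · have h1 : ContinuousOn (fun p : ℝ × ℝ =>
        fderivWithin ℝ (fun p : ℝ × ℝ => φ p.1 p.2) SD p) SD :=
      hφ.continuousOn_fderivWithin hSDuniq le_rfl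
    exact h1.clm_apply continuousOn_const
  intro t ht x hx
  have hxt : (x, t) ∈ SD := ⟨hx, ht⟩
  -- joint derivative of φ
  have hφd : HasFDerivWithinAt (fun p : ℝ × ℝ => φ p.1 p.2)
      (fderivWithin ℝ (fun p : ℝ × ℝ => φ p.1 p.2) SD (x, t)) SD (x, t) :=
    (hφ.differentiableOn one_ne_zero (x, t) hxt).hasFDerivWithinAt
  set Jφ := fderivWithin ℝ (fun p : ℝ × ℝ => φ p.1 p.2) SD (x, t) with hJφ
  -- partial derivatives of φ
  have hφt : HasDerivWithinAt (fun s => φ x s) (F x t) D t := by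
    have hι : HasDerivWithinAt (fun s : ℝ => (x, s)) ((0 : ℝ), (1 : ℝ)) D t :=
      ((hasDerivAt_const t x).prodMk (hasDerivAt_id t)).hasDerivWithinAt
    exact hφd.comp_hasDerivWithinAt t hι (fun s hs => ⟨hx, hs⟩)
  have hφx : HasDerivWithinAt (fun y => φ y t) (Jφ (1, 0)) (Set.Icc a b) x := by
    have hι : HasDerivWithinAt (fun y : ℝ => (y, t)) ((1 : ℝ), (0 : ℝ)) (Set.Icc a b) x :=
      ((hasDerivAt_id x).prodMk (hasDerivAt_const x t)).hasDerivWithinAt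
    exact hφd.comp_hasDerivWithinAt x hι (fun y hy => (⟨hy, ht⟩ : (y, t) ∈ SD))
  set Fx := Jφ (1, 0) with hFx
  set P : EuclideanSpace ℝ (Fin 2) := pt x (φ x t) with hP
  have hPt : (P, t) ∈ UD := ⟨Set.mem_univ _, ht⟩
  -- joint derivatives of q and ψ
  have hqd : HasFDerivWithinAt (fun p : EuclideanSpace ℝ (Fin 2) × ℝ => q p.1 p.2)
      (fderivWithin ℝ (fun p : EuclideanSpace ℝ (Fin 2) × ℝ => q p.1 p.2) UD (P, t))
      UD (P, t) :=
    (hq.differentiableOn one_ne_zero (P, t) hPt).hasFDerivWithinAt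
  have hψd : HasFDerivWithinAt (fun p : EuclideanSpace ℝ (Fin 2) × ℝ => ψ p.1 p.2)
      (fderivWithin ℝ (fun p : EuclideanSpace ℝ (Fin 2) × ℝ => ψ p.1 p.2) UD (P, t))
      UD (P, t) :=
    (hψ.differentiableOn one_ne_zero (P, t) hPt).hasFDerivWithinAt
  set Lq := fderivWithin ℝ (fun p : EuclideanSpace ℝ (Fin 2) × ℝ => q p.1 p.2) UD (P, t)
    with hLq
  set Lψ := fderivWithin ℝ (fun p : EuclideanSpace ℝ (Fin 2) × ℝ => ψ p.1 p.2) UD (P, t)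
    with hLψ
  -- spatial slices of q and ψ are differentiable (full `fderiv`)
  have hinner : ∀ z : EuclideanSpace ℝ (Fin 2),
      HasFDerivWithinAt (fun w : EuclideanSpace ℝ (Fin 2) => (w, t))
        (ContinuousLinearMap.inl ℝ (EuclideanSpace ℝ (Fin 2)) ℝ) Set.univ z := by
    intro z
    exact ((hasFDerivAt_id z).prodMk (hasFDerivAt_const t z)).hasFDerivWithinAt
  have hq_space : HasFDerivAt (fun z => q z t)
      (Lq.comp (ContinuousLinearMap.inl ℝ (EuclideanSpace ℝ (Fin 2)) ℝ)) P := by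
    have := hqd.comp P (hinner P) (fun z _ => (⟨Set.mem_univ _, ht⟩ : (z, t) ∈ UD))
    rw [hasFDerivWithinAt_univ] at this
    exact this
  have hψ_space : HasFDerivAt (fun z => ψ z t)
      (Lψ.comp (ContinuousLinearMap.inl ℝ (EuclideanSpace ℝ (Fin 2)) ℝ)) P := by
    have := hψd.comp P (hinner P) (fun z _ => (⟨Set.mem_univ _, ht⟩ : (z, t) ∈ UD))
    rw [hasFDerivWithinAt_univ] at this
    exact this
  have hq_time : HasDerivWithinAt (fun s => q P s) (Lq (0, 1)) D t := by
    have hι : HasDerivWithinAt (fun s : ℝ => ((P : EuclideanSpace ℝ (Fin 2)), s))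
        ((0 : EuclideanSpace ℝ (Fin 2)), (1 : ℝ)) D t :=
      ((hasDerivAt_const t P).prodMk (hasDerivAt_id t)).hasDerivWithinAt
    exact hqd.comp_hasDerivWithinAt t hι (fun s hs => ⟨Set.mem_univ _, hs⟩)
  -- notation for partials
  set Qx := Lq (EuclideanSpace.single 0 1, 0) with hQx
  set Qy := Lq (EuclideanSpace.single 1 1, 0) with hQy
  set Qt := Lq (0, 1) with hQt
  set Px := Lψ (EuclideanSpace.single 0 1, 0) with hPx
  set Py := Lψ (EuclideanSpace.single 1 1, 0) with hPy
  have hfq : ∀ i : Fin 2, fderiv ℝ (fun z => q z t) P (EuclideanSpace.single i 1)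
      = Lq (EuclideanSpace.single i 1, 0) := by
    intro i
    rw [hq_space.fderiv]
    simp [ContinuousLinearMap.inl_apply]
  have hfψ : ∀ i : Fin 2, fderiv ℝ (fun z => ψ z t) P (EuclideanSpace.single i 1)
      = Lψ (EuclideanSpace.single i 1, 0) := by
    intro i
    rw [hψ_space.fderiv]
    simp [ContinuousLinearMap.inl_apply]
  have hqt_eq : derivWithin (fun s => q P s) D t = Qt :=
    hq_time.derivWithin (hDuniq t ht)
  -- chain rule along x for q
  have hdecomp1 : ∀ (u v : ℝ), ((pt u v, (0:ℝ)) : EuclideanSpace ℝ (Fin 2) × ℝ)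
      = u • (EuclideanSpace.single (0:Fin 2) (1:ℝ), (0:ℝ))
        + v • (EuclideanSpace.single (1:Fin 2) (1:ℝ), (0:ℝ)) := by
    intro u v
    rw [Prod.ext_iff]
    constructor
    · simp [pt_eq]
    · simp
  have hchainq : HasDerivWithinAt (fun y => q (pt y (φ y t)) t)
      (Qx + Fx * Qy) (Set.Icc a b) x := by
    have h1 : HasDerivWithinAt (fun y : ℝ => (y, φ y t)) ((1 : ℝ), Fx) (Set.Icc a b) x :=
      (hasDerivAt_id x).hasDerivWithinAt.prodMk hφx
    have h2 : HasDerivWithinAt (fun y : ℝ => pt y (φ y t)) (pt 1 Fx) (Set.Icc a b) x := by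
      have h := Lam.hasFDerivAt.comp_hasDerivWithinAt x h1
      have he : (⇑Lam ∘ fun y : ℝ => (y, φ y t)) = fun y : ℝ => pt y (φ y t) :=
        funext fun y => Lam_apply y (φ y t)
      rw [he, Lam_apply 1 Fx] at h
      exact h
    have h3 := hq_space.comp_hasDerivWithinAt x h2
    have h4 : (Lq.comp (ContinuousLinearMap.inl ℝ (EuclideanSpace ℝ (Fin 2)) ℝ)) (pt 1 Fx)
        = Qx + Fx * Qy := by
      rw [ContinuousLinearMap.comp_apply]
      have : (ContinuousLinearMap.inl ℝ (EuclideanSpace ℝ (Fin 2)) ℝ) (pt 1 Fx)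
          = ((pt 1 Fx, (0:ℝ)) : EuclideanSpace ℝ (Fin 2) × ℝ) := rfl
      rw [this, hdecomp1 1 Fx, map_add, _root_.map_smul, _root_.map_smul]
      rw [smul_eq_mul, smul_eq_mul, one_mul]
    rw [h4] at h3
    exact h3
  have hconstq : HasDerivWithinAt (fun y => q (pt y (φ y t)) t) 0 (Set.Icc a b) x := by
    refine (hasDerivWithinAt_const x (Set.Icc a b) K).congr ?_ ?_
    · intro y hy; exact hlev y hy t ht
    · exact hlev x hx t ht
  have heqx : Qx + Fx * Qy = 0 := by
    rw [← hchainq.derivWithin ((uniqueDiffOn_Icc hab) x hx),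
      hconstq.derivWithin ((uniqueDiffOn_Icc hab) x hx)]
  -- chain rule along t for q
  have hdecomp2 : ∀ (v : ℝ), ((pt 0 v, (1:ℝ)) : EuclideanSpace ℝ (Fin 2) × ℝ)
      = v • (EuclideanSpace.single (1:Fin 2) (1:ℝ), (0:ℝ))
        + ((0 : EuclideanSpace ℝ (Fin 2)), (1:ℝ)) := by
    intro v
    rw [Prod.ext_iff]
    constructor
    · simp [pt_eq]
    · simp
  have hchainqt : HasDerivWithinAt (fun s => q (pt x (φ x s)) s)
      (F x t * Qy + Qt) D t := by
    have h1 : HasDerivWithinAt (fun s : ℝ => ((x : ℝ), φ x s)) ((0 : ℝ), F x t) D t :=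
      (hasDerivAt_const t x).hasDerivWithinAt.prodMk hφt
    have h2 : HasDerivWithinAt (fun s : ℝ => pt x (φ x s)) (pt 0 (F x t)) D t := by
      have h := Lam.hasFDerivAt.comp_hasDerivWithinAt t h1
      have he : (⇑Lam ∘ fun s : ℝ => ((x : ℝ), φ x s)) = fun s : ℝ => pt x (φ x s) :=
        funext fun s => Lam_apply x (φ x s)
      rw [he, Lam_apply 0 (F x t)] at h
      exact h
    have h3 : HasDerivWithinAt (fun s : ℝ => (pt x (φ x s), s))
        ((pt 0 (F x t), (1 : ℝ)) : EuclideanSpace ℝ (Fin 2) × ℝ) D t :=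
      h2.prodMk (hasDerivAt_id t).hasDerivWithinAt
    have h4 := hqd.comp_hasDerivWithinAt_of_eq t h3 (fun s hs => ⟨Set.mem_univ _, hs⟩) rfl
    have h5 : Lq ((pt 0 (F x t), (1 : ℝ))) = F x t * Qy + Qt := by
      rw [hdecomp2 (F x t), map_add, _root_.map_smul, smul_eq_mul, ← hQy, ← hQt]
    rw [h5] at h4
    exact h4
  have hconstqt : HasDerivWithinAt (fun s => q (pt x (φ x s)) s) 0 D t := by
    refine (hasDerivWithinAt_const t D K).congr ?_ ?_
    · intro s hs; exact hlev x hx s hs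
    · exact hlev x hx t ht
  have heqt : F x t * Qy + Qt = 0 := by
    rw [← hchainqt.derivWithin (hDuniq t ht), hconstqt.derivWithin (hDuniq t ht)]
  -- transport equation at (P, t)
  have htr := htransport P t ht
  rw [hqt_eq, hfq 0, hfq 1, hfψ 0, hfψ 1, ← hQx, ← hQy, ← hPx, ← hPy] at htr
  -- solve for F x t
  have hQy0 : Qy ≠ 0 := by
    have := hnd x hx t ht
    rw [hfq 1] at this
    exact this
  have hFeq : F x t = Px + Py * Fx := by
    have h1 : F x t * Qy = (Px + Py * Fx) * Qy := by
      have hQxv : Qx = -(Fx * Qy) := by linarith [heqx]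
      have hQtv : Qt = -(F x t * Qy) := by linarith [heqt]
      rw [hQxv, hQtv] at htr
      ring_nf at htr ⊢
      linarith [htr]
    exact mul_right_cancel₀ hQy0 h1
  -- chain rule along x for ψ
  have hchainψ : HasDerivWithinAt (fun y => ψ (pt y (φ y t)) t)
      (Px + Fx * Py) (Set.Icc a b) x := by
    have h1 : HasDerivWithinAt (fun y : ℝ => (y, φ y t)) ((1 : ℝ), Fx) (Set.Icc a b) x :=
      (hasDerivAt_id x).hasDerivWithinAt.prodMk hφx
    have h2 : HasDerivWithinAt (fun y : ℝ => pt y (φ y t)) (pt 1 Fx) (Set.Icc a b) x := by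
      have h := Lam.hasFDerivAt.comp_hasDerivWithinAt x h1
      have he : (⇑Lam ∘ fun y : ℝ => (y, φ y t)) = fun y : ℝ => pt y (φ y t) :=
        funext fun y => Lam_apply y (φ y t)
      rw [he, Lam_apply 1 Fx] at h
      exact h
    have h3 := hψ_space.comp_hasDerivWithinAt x h2
    have h4 : (Lψ.comp (ContinuousLinearMap.inl ℝ (EuclideanSpace ℝ (Fin 2)) ℝ)) (pt 1 Fx)
        = Px + Fx * Py := by
      rw [ContinuousLinearMap.comp_apply]
      have : (ContinuousLinearMap.inl ℝ (EuclideanSpace ℝ (Fin 2)) ℝ) (pt 1 Fx)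
          = ((pt 1 Fx, (0:ℝ)) : EuclideanSpace ℝ (Fin 2) × ℝ) := rfl
      rw [this, hdecomp1 1 Fx, map_add, _root_.map_smul, _root_.map_smul]
      rw [smul_eq_mul, smul_eq_mul, one_mul]
    rw [h4] at h3
    exact h3
  refine ⟨hφt, ?_⟩
  have : Px + Fx * Py = F x t := by rw [hFeq]; ring
  rw [← this]
  exact hchainψ
lemma timeDom_subset_Ici (Tstar : EReal) : timeDom Tstar ⊆ Set.Ici (0:ℝ) :=
  fun _ h => h.1

lemma timeDom_zero_mem (Tstar : EReal) (hT : 0 < Tstar) : (0:ℝ) ∈ timeDom Tstar :=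
  ⟨le_refl 0, by exact_mod_cast hT⟩

lemma timeDom_exists_w (Tstar : EReal) {t : ℝ} (ht : t ∈ timeDom Tstar) :
    ∃ w : ℝ, t < w ∧ Set.Icc (0:ℝ) w ⊆ timeDom Tstar := by
  induction Tstar using EReal.rec with
  | bot => exact absurd ht.2 (by simp)
  | coe T =>
    have htT : t < T := by exact_mod_cast ht.2
    refine ⟨(t + T) / 2, by linarith, ?_⟩
    intro s hs
    refine ⟨hs.1, ?_⟩
    have : s < T := by
      have := hs.2
      linarith
    exact_mod_cast this
  | top =>
    refine ⟨t + 1, by linarith, ?_⟩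
    intro s hs
    exact ⟨hs.1, by simp⟩

lemma timeDom_ordConnected (Tstar : EReal) : (timeDom Tstar).OrdConnected := by
  constructor
  intro x hx y hy z hz
  refine ⟨le_trans hx.1 hz.1, lt_of_le_of_lt ?_ hy.2⟩
  exact_mod_cast hz.2

lemma timeDom_mem_interior (Tstar : EReal) {t : ℝ} (ht : t ∈ timeDom Tstar) (ht0 : 0 < t) :
    t ∈ interior (timeDom Tstar) := by
  obtain ⟨w, htw, hsub⟩ := timeDom_exists_w Tstar ht
  have hsub2 : Set.Ioo (0:ℝ) w ⊆ timeDom Tstar := fun s hs => hsub ⟨hs.1.le, hs.2.le⟩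
  exact interior_maximal hsub2 isOpen_Ioo ⟨ht0, htw⟩

lemma timeDom_convex (Tstar : EReal) : Convex ℝ (timeDom Tstar) := by
  rw [convex_iff_ordConnected]
  exact timeDom_ordConnected Tstar

lemma timeDom_uniqueDiffOn (Tstar : EReal) (hT : 0 < Tstar) :
    UniqueDiffOn ℝ (timeDom Tstar) := by
  refine uniqueDiffOn_convex (timeDom_convex Tstar) ?_
  obtain ⟨w, hw0, hsub⟩ := timeDom_exists_w Tstar (timeDom_zero_mem Tstar hT)
  exact ⟨w / 2, timeDom_mem_interior Tstar (hsub ⟨by linarith, by linarith⟩) (by linarith)⟩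

lemma timeDom_measurableSet (Tstar : EReal) : MeasurableSet (timeDom Tstar) := by
  have : timeDom Tstar = Set.Ici (0:ℝ) ∩ {t : ℝ | (t : EReal) < Tstar} := rfl
  rw [this]
  refine measurableSet_Ici.inter ?_
  have : IsOpen {t : ℝ | (t : EReal) < Tstar} := by
    have : {t : ℝ | (t : EReal) < Tstar} = (fun t : ℝ => (t : EReal)) ⁻¹' (Set.Iio Tstar) := rfl
    rw [this]
    exact isOpen_Iio.preimage continuous_coe_real_ereal
  exact this.measurableSet
/-- Let `q, ψ` be `C¹` with `∂ₜ q + ∇^⊥ψ · ∇ₓ q = 0`, and let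
`φ₁ < φ₂` be `C¹` graph parameterizations of two level curves of `q` on `[a,b] × [0,T*)`
with `∂q/∂x₂ ≠ 0` along both curves, undergoing semi-uniform collapse with constant
`c > 0`. Suppose `|ψ(z₁,t) - ψ(z₂,t)| ≤ M |z₁ - z₂| |log |z₁ - z₂||` for
`0 < |z₁ - z₂| ≤ 1/2`, and the mean thickness
`A(t) = (b-a)⁻¹ ∫_a^b [φ₂ - φ₁] dx₁` satisfies `0 < A(t) < c/(2e)`. Then there is a
constant `C > 0` depending only on `c` with
`|A'(t)| ≤ (C M/(b-a)) · A(t) · |log A(t)|` for all `t ∈ [0,T*)`. -/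
theorem mean_thickness_differential_inequality
    (Tstar : EReal) (hT : 0 < Tstar)
    (q ψ : EuclideanSpace ℝ (Fin 2) → ℝ → ℝ)
    (hq : ContDiffOn ℝ 1 (fun p : EuclideanSpace ℝ (Fin 2) × ℝ => q p.1 p.2)
      (Set.univ ×ˢ timeDom Tstar))
    (hψ : ContDiffOn ℝ 1 (fun p : EuclideanSpace ℝ (Fin 2) × ℝ => ψ p.1 p.2)
      (Set.univ ×ˢ timeDom Tstar))
    (htransport : ∀ (x : EuclideanSpace ℝ (Fin 2)), ∀ t ∈ timeDom Tstar,
      derivWithin (fun s => q x s) (timeDom Tstar) t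
        + (-(fderiv ℝ (fun z => ψ z t) x (EuclideanSpace.single 1 1)))
            * fderiv ℝ (fun z => q z t) x (EuclideanSpace.single 0 1)
        + (fderiv ℝ (fun z => ψ z t) x (EuclideanSpace.single 0 1))
            * fderiv ℝ (fun z => q z t) x (EuclideanSpace.single 1 1) = 0)
    (a b : ℝ) (hab : a < b)
    (φ₁ φ₂ : ℝ → ℝ → ℝ)
    (hφ₁ : ContDiffOn ℝ 1 (fun p : ℝ × ℝ => φ₁ p.1 p.2) (Set.Icc a b ×ˢ timeDom Tstar))
    (hφ₂ : ContDiffOn ℝ 1 (fun p : ℝ × ℝ => φ₂ p.1 p.2) (Set.Icc a b ×ˢ timeDom Tstar))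
    (horder : ∀ x₁ ∈ Set.Icc a b, ∀ t ∈ timeDom Tstar, φ₁ x₁ t < φ₂ x₁ t)
    (K₁ K₂ : ℝ)
    (hlevel₁ : ∀ x₁ ∈ Set.Icc a b, ∀ t ∈ timeDom Tstar, q (pt x₁ (φ₁ x₁ t)) t = K₁)
    (hlevel₂ : ∀ x₁ ∈ Set.Icc a b, ∀ t ∈ timeDom Tstar, q (pt x₁ (φ₂ x₁ t)) t = K₂)
    (hnondeg₁ : ∀ x₁ ∈ Set.Icc a b, ∀ t ∈ timeDom Tstar,
      fderiv ℝ (fun z => q z t) (pt x₁ (φ₁ x₁ t)) (EuclideanSpace.single 1 1) ≠ 0)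
    (hnondeg₂ : ∀ x₁ ∈ Set.Icc a b, ∀ t ∈ timeDom Tstar,
      fderiv ℝ (fun z => q z t) (pt x₁ (φ₂ x₁ t)) (EuclideanSpace.single 1 1) ≠ 0)
    (c : ℝ) (hc : 0 < c)
    (hsemi : ∀ t ∈ timeDom Tstar, ∀ x₁ ∈ Set.Icc a b, ∀ y₁ ∈ Set.Icc a b,
      c * |φ₂ y₁ t - φ₁ y₁ t| ≤ |φ₂ x₁ t - φ₁ x₁ t|)
    (M : ℝ) (hM : 0 < M)
    (hlip : ∀ t ∈ timeDom Tstar, ∀ z₁ z₂ : EuclideanSpace ℝ (Fin 2),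
      0 < dist z₁ z₂ → dist z₁ z₂ ≤ 1 / 2 →
        |ψ z₁ t - ψ z₂ t| ≤ M * dist z₁ z₂ * |Real.log (dist z₁ z₂)|)
    (hAsmall : ∀ t ∈ timeDom Tstar,
      0 < (b - a)⁻¹ * ∫ x₁ in a..b, (φ₂ x₁ t - φ₁ x₁ t) ∧
      (b - a)⁻¹ * ∫ x₁ in a..b, (φ₂ x₁ t - φ₁ x₁ t) < c / (2 * Real.exp 1)) :
    ∃ C : ℝ, 0 < C ∧ ∀ t ∈ timeDom Tstar,
      |derivWithin (fun s => (b - a)⁻¹ * ∫ x₁ in a..b, (φ₂ x₁ s - φ₁ x₁ s))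
          (timeDom Tstar) t|
        ≤ C * M / (b - a) * ((b - a)⁻¹ * ∫ x₁ in a..b, (φ₂ x₁ t - φ₁ x₁ t))
            * |Real.log ((b - a)⁻¹ * ∫ x₁ in a..b, (φ₂ x₁ t - φ₁ x₁ t))| := by
  classical
  have hDuniq : UniqueDiffOn ℝ (timeDom Tstar) := timeDom_uniqueDiffOn Tstar hT
  have hDord : (timeDom Tstar).OrdConnected := timeDom_ordConnected Tstar
  have hDmeas : MeasurableSet (timeDom Tstar) := timeDom_measurableSet Tstar
  have habpos : (0:ℝ) < b - a := by linarith
  obtain ⟨F₁, hF₁cont, hF₁⟩ :=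
    key_lemma Tstar q ψ hq hψ htransport a b hab φ₁ K₁ hφ₁ hlevel₁ hnondeg₁ hDuniq
  obtain ⟨F₂, hF₂cont, hF₂⟩ :=
    key_lemma Tstar q ψ hq hψ htransport a b hab φ₂ K₂ hφ₂ hlevel₂ hnondeg₂ hDuniq
  set D := timeDom Tstar with hDdef
  set Fδ : ℝ → ℝ → ℝ := fun x t => F₂ x t - F₁ x t with hFδ
  set Ψ : ℝ → ℝ → ℝ := fun x t => ψ (pt x (φ₂ x t)) t - ψ (pt x (φ₁ x t)) t with hΨ
  set G : ℝ → ℝ := fun s => Ψ b s - Ψ a s with hG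
  set A : ℝ → ℝ := fun s => (b - a)⁻¹ * ∫ x₁ in a..b, (φ₂ x₁ s - φ₁ x₁ s) with hA
  -- continuity facts
  have hFδcont : ContinuousOn (fun p : ℝ × ℝ => Fδ p.1 p.2) (Set.Icc a b ×ˢ D) :=
    hF₂cont.sub hF₁cont
  have hδcont : ContinuousOn (fun p : ℝ × ℝ => φ₂ p.1 p.2 - φ₁ p.1 p.2)
      (Set.Icc a b ×ˢ D) := (hφ₂.continuousOn).sub (hφ₁.continuousOn)
  have hδx : ∀ t ∈ D, ContinuousOn (fun x => φ₂ x t - φ₁ x t) (Set.Icc a b) := by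
    intro t ht
    have : ContinuousOn (fun x : ℝ => ((x, t) : ℝ × ℝ)) (Set.Icc a b) :=
      (continuous_id.prodMk continuous_const).continuousOn
    exact hδcont.comp this (fun x hx => ⟨hx, ht⟩)
  have hδt : ∀ x ∈ Set.Icc a b, ContinuousOn (fun s => φ₂ x s - φ₁ x s) D := by
    intro x hx
    have : ContinuousOn (fun s : ℝ => ((x, s) : ℝ × ℝ)) D :=
      (continuous_const.prodMk continuous_id).continuousOn
    exact hδcont.comp this (fun s hs => ⟨hx, hs⟩)
  have hFδx : ∀ t ∈ D, ContinuousOn (fun x => Fδ x t) (Set.Icc a b) := by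
    intro t ht
    have : ContinuousOn (fun x : ℝ => ((x, t) : ℝ × ℝ)) (Set.Icc a b) :=
      (continuous_id.prodMk continuous_const).continuousOn
    exact hFδcont.comp this (fun x hx => ⟨hx, ht⟩)
  have hψcont : ContinuousOn (fun p : EuclideanSpace ℝ (Fin 2) × ℝ => ψ p.1 p.2)
      (Set.univ ×ˢ D) := hψ.continuousOn
  have hψcomp : ∀ (φ : ℝ → ℝ → ℝ), ContinuousOn (fun p : ℝ × ℝ => φ p.1 p.2)
      (Set.Icc a b ×ˢ D) →
      ContinuousOn (fun p : ℝ × ℝ => ψ (pt p.1 (φ p.1 p.2)) p.2) (Set.Icc a b ×ˢ D) := by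
    intro φ hφc
    have h1 : ContinuousOn (fun p : ℝ × ℝ => ((pt p.1 (φ p.1 p.2), p.2) :
        EuclideanSpace ℝ (Fin 2) × ℝ)) (Set.Icc a b ×ˢ D) := by
      refine ContinuousOn.prodMk ?_ continuous_snd.continuousOn
      have : ContinuousOn (fun p : ℝ × ℝ => Lam (p.1, φ p.1 p.2)) (Set.Icc a b ×ˢ D) :=
        Lam.continuous.comp_continuousOn (continuous_fst.continuousOn.prodMk hφc)
      have he : (fun p : ℝ × ℝ => Lam (p.1, φ p.1 p.2))
          = fun p : ℝ × ℝ => pt p.1 (φ p.1 p.2) := funext fun p => Lam_apply _ _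
      rw [he] at this
      exact this
    exact hψcont.comp h1 (fun p hp => ⟨Set.mem_univ _, hp.2⟩)
  have hΨcont : ContinuousOn (fun p : ℝ × ℝ => Ψ p.1 p.2) (Set.Icc a b ×ˢ D) :=
    (hψcomp φ₂ hφ₂.continuousOn).sub (hψcomp φ₁ hφ₁.continuousOn)
  have hΨx : ∀ t ∈ D, ContinuousOn (fun y => Ψ y t) (Set.Icc a b) := by
    intro t ht
    have : ContinuousOn (fun x : ℝ => ((x, t) : ℝ × ℝ)) (Set.Icc a b) :=
      (continuous_id.prodMk continuous_const).continuousOn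
    exact hΨcont.comp this (fun x hx => ⟨hx, ht⟩)
  have hGcont : ContinuousOn G D := by
    have h1 : ∀ x ∈ Set.Icc a b, ContinuousOn (fun s => Ψ x s) D := by
      intro x hx
      have : ContinuousOn (fun s : ℝ => ((x, s) : ℝ × ℝ)) D :=
        (continuous_const.prodMk continuous_id).continuousOn
      exact hΨcont.comp this (fun s hs => ⟨hx, hs⟩)
    exact (h1 b (Set.right_mem_Icc.mpr hab.le)).sub (h1 a (Set.left_mem_Icc.mpr hab.le))
  -- derivative facts
  have hδdt : ∀ t ∈ D, ∀ x ∈ Set.Icc a b,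
      HasDerivWithinAt (fun s => φ₂ x s - φ₁ x s) (Fδ x t) D t := by
    intro t ht x hx
    exact ((hF₂ t ht x hx).1).sub ((hF₁ t ht x hx).1)
  have hΨdx : ∀ t ∈ D, ∀ x ∈ Set.Icc a b,
      HasDerivWithinAt (fun y => Ψ y t) (Fδ x t) (Set.Icc a b) x := by
    intro t ht x hx
    exact ((hF₂ t ht x hx).2).sub ((hF₁ t ht x hx).2)
  -- FTC in x
  have hFTCx : ∀ t ∈ D, (∫ y in a..b, Fδ y t) = G t := by
    intro t ht
    have hint : IntervalIntegrable (fun y => Fδ y t) volume a b := by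
      refine ContinuousOn.intervalIntegrable ?_
      rw [Set.uIcc_of_le hab.le]
      exact hFδx t ht
    have := intervalIntegral.integral_eq_sub_of_hasDeriv_right_of_le hab.le
      (hΨx t ht) (fun x hxI => ?_) hint
    · exact this
    · refine ((hΨdx t ht x (Set.mem_Icc_of_Ioo hxI)).mono_of_mem_nhdsWithin ?_)
      exact mem_nhdsWithin_of_mem_nhds (Icc_mem_nhds hxI.1 hxI.2)
  -- FTC in t
  have hFTCt : ∀ t ∈ D, ∀ t' ∈ D, ∀ x ∈ Set.Icc a b,
      (∫ s in t..t', Fδ x s) = (φ₂ x t' - φ₁ x t') - (φ₂ x t - φ₁ x t) := by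
    intro t ht t' ht' x hx
    have huIcc : Set.uIcc t t' ⊆ D := hDord.uIcc_subset ht ht'
    refine intervalIntegral.integral_eq_sub_of_hasDeriv_right
      ((hδt x hx).mono huIcc) (fun s hs => ?_) ?_
    · have h1 : s ∈ Set.Icc (min t t') (max t t') := Set.Ioo_subset_Icc_self hs
      have hsD : s ∈ D := huIcc (by simpa [Set.uIcc] using h1)
      have hs0 : (0:ℝ) < s := lt_of_le_of_lt (le_min ht.1 ht'.1) hs.1
      have hDnhds : D ∈ nhds s :=
        mem_interior_iff_mem_nhds.mp (timeDom_mem_interior Tstar hsD hs0)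
      exact ((hδdt s hsD x hx).hasDerivAt hDnhds).hasDerivWithinAt
    · refine ContinuousOn.intervalIntegrable ?_
      have : ContinuousOn (fun s : ℝ => ((x, s) : ℝ × ℝ)) (Set.uIcc t t') :=
        (continuous_const.prodMk continuous_id).continuousOn
      exact hFδcont.comp this (fun s hs => ⟨hx, huIcc hs⟩)
  -- Fubini: swap the two integrals
  have hswap : ∀ t ∈ D, ∀ t' ∈ D, t ≤ t' →
      (∫ y in a..b, ((φ₂ y t' - φ₁ y t') - (φ₂ y t - φ₁ y t))) = ∫ s in t..t', G s := by
    intro t ht t' ht' htt'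
    have hIccD : Set.Icc t t' ⊆ D := hDord.out ht ht'
    have hintprod : IntegrableOn (fun p : ℝ × ℝ => Fδ p.1 p.2)
        (Set.Ioc a b ×ˢ Set.Ioc t t') (volume.prod volume) := by
      refine IntegrableOn.mono_set ?_
        (Set.prod_mono Set.Ioc_subset_Icc_self Set.Ioc_subset_Icc_self)
      refine ContinuousOn.integrableOn_compact (isCompact_Icc.prod isCompact_Icc) ?_
      exact hFδcont.mono (Set.prod_mono (le_refl _) hIccD)
    have hswap0 : (∫ y in Set.Ioc a b, ∫ s in Set.Ioc t t', Fδ y s)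
        = ∫ s in Set.Ioc t t', ∫ y in Set.Ioc a b, Fδ y s := by
      have h := MeasureTheory.integral_integral_swap (μ := volume.restrict (Set.Ioc a b))
        (ν := volume.restrict (Set.Ioc t t')) (f := fun y s => Fδ y s) ?_
      · exact h
      · rw [Measure.prod_restrict]
        exact hintprod
    calc (∫ y in a..b, ((φ₂ y t' - φ₁ y t') - (φ₂ y t - φ₁ y t)))
        = ∫ y in a..b, ∫ s in t..t', Fδ y s := by
          refine intervalIntegral.integral_congr ?_
          intro y hy
          rw [Set.uIcc_of_le hab.le] at hy
          exact (hFTCt t ht t' ht' y hy).symm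
      _ = ∫ y in Set.Ioc a b, ∫ s in Set.Ioc t t', Fδ y s := by
          rw [intervalIntegral.integral_of_le hab.le]
          simp only [intervalIntegral.integral_of_le htt']
      _ = ∫ s in Set.Ioc t t', ∫ y in Set.Ioc a b, Fδ y s := hswap0
      _ = ∫ s in Set.Ioc t t', G s := by
          refine setIntegral_congr_fun measurableSet_Ioc ?_
          intro s hs
          have hsD : s ∈ D := hIccD (Set.Ioc_subset_Icc_self hs)
          show (∫ y in Set.Ioc a b, Fδ y s) = G s
          rw [← intervalIntegral.integral_of_le hab.le]
          exact hFTCx s hsD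
      _ = ∫ s in t..t', G s := (intervalIntegral.integral_of_le htt').symm
  -- representation of A
  have hδint : ∀ t ∈ D, IntervalIntegrable (fun y => φ₂ y t - φ₁ y t) volume a b := by
    intro t ht
    refine ContinuousOn.intervalIntegrable ?_
    rw [Set.uIcc_of_le hab.le]
    exact hδx t ht
  have hrep : ∀ t ∈ D, ∀ t' ∈ D, A t' - A t = (b - a)⁻¹ * ∫ s in t..t', G s := by
    intro t ht t' ht'
    have h1 : A t' - A t
        = (b - a)⁻¹ * ∫ y in a..b, ((φ₂ y t' - φ₁ y t') - (φ₂ y t - φ₁ y t)) := by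
      rw [hA]
      rw [intervalIntegral.integral_sub (hδint t' ht') (hδint t ht)]
      ring
    rcases le_total t t' with h | h
    · rw [h1, hswap t ht t' ht' h]
    · rw [h1]
      have h2 := hswap t' ht' t ht h
      have h3 : (∫ y in a..b, ((φ₂ y t' - φ₁ y t') - (φ₂ y t - φ₁ y t)))
          = -(∫ y in a..b, ((φ₂ y t - φ₁ y t) - (φ₂ y t' - φ₁ y t'))) := by
        rw [← intervalIntegral.integral_neg]
        congr 1
        funext y
        ring
      rw [h3, h2, intervalIntegral.integral_symm]
      ring
  -- A has derivative within D
  have hAderiv : ∀ t ∈ D, HasDerivWithinAt A ((b - a)⁻¹ * G t) D t := by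
    intro t ht
    have hGmeas : AEStronglyMeasurable G (volume.restrict D) :=
      hGcont.aestronglyMeasurable hDmeas
    have hInt : HasDerivWithinAt (fun u => ∫ s in t..u, G s) (G t) D t := by
      rcases eq_or_lt_of_le ht.1 with h0 | h0
      · -- t = 0
        subst h0
        obtain ⟨w, hw0, hsub⟩ := timeDom_exists_w Tstar ht
        have hDmem : D ∈ nhdsWithin (0:ℝ) (Set.Ioi (0:ℝ)) := by
          refine Filter.mem_of_superset
            (Filter.inter_mem self_mem_nhdsWithin
              (mem_nhdsWithin_of_mem_nhds (Iio_mem_nhds hw0))) ?_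
          intro s hs
          exact hsub ⟨le_of_lt hs.1, le_of_lt hs.2⟩
        have hmeas : StronglyMeasurableAtFilter G (nhdsWithin (0:ℝ) (Set.Ioi (0:ℝ)))
            volume := ⟨D, hDmem, hGmeas⟩
        have hcont : ContinuousWithinAt G (Set.Ioi (0:ℝ)) 0 :=
          (hGcont 0 ht).mono_of_mem_nhdsWithin hDmem
        have h := intervalIntegral.integral_hasDerivWithinAt_right
          (IntervalIntegrable.refl (f := G) (μ := volume) (a := 0))
          (s := Set.Ici (0:ℝ)) (t := Set.Ioi (0:ℝ)) hmeas hcont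
        exact h.mono (timeDom_subset_Ici Tstar)
      · -- 0 < t
        have hDnhds : D ∈ nhds t :=
          mem_interior_iff_mem_nhds.mp (timeDom_mem_interior Tstar ht h0)
        have hmeas : StronglyMeasurableAtFilter G (nhds t) volume :=
          ⟨D, hDnhds, hGmeas⟩
        have hcont : ContinuousAt G t := (hGcont t ht).continuousAt hDnhds
        exact (intervalIntegral.integral_hasDerivAt_right
          (IntervalIntegrable.refl (f := G) (μ := volume) (a := t))
          hmeas hcont).hasDerivWithinAt
    have hB : HasDerivWithinAt (fun u => A t + (b - a)⁻¹ * ∫ s in t..u, G s)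
        ((b - a)⁻¹ * G t) D t := (hInt.const_mul ((b - a)⁻¹)).const_add (A t)
    refine hB.congr ?_ ?_
    · intro u hu
      have := hrep t ht u hu
      linarith
    · simp
  -- the constant
  refine ⟨2 * (1 + -Real.log c) / c, ?_, ?_⟩
  · have hc1 : c ≤ 1 := by
      have h := hsemi 0 (timeDom_zero_mem Tstar hT) a (Set.left_mem_Icc.mpr hab.le)
        a (Set.left_mem_Icc.mpr hab.le)
      have hpos : 0 < |φ₂ a 0 - φ₁ a 0| := by
        have := horder a (Set.left_mem_Icc.mpr hab.le) 0 (timeDom_zero_mem Tstar hT)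
        rw [abs_pos]
        intro h0
        linarith
      nlinarith
    have : 0 ≤ -Real.log c := by
      simpa using Real.log_nonpos hc.le hc1
    positivity
  intro t ht
  have hAval : derivWithin A D t = (b - a)⁻¹ * G t :=
    (hAderiv t ht).derivWithin (hDuniq t ht)
  obtain ⟨hA0, hA1⟩ := hAsmall t ht
  have hc1 : c ≤ 1 := by
    have h := hsemi t ht a (Set.left_mem_Icc.mpr hab.le) a (Set.left_mem_Icc.mpr hab.le)
    have hpos : 0 < |φ₂ a t - φ₁ a t| := by
      have := horder a (Set.left_mem_Icc.mpr hab.le) t ht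
      rw [abs_pos]
      intro h0
      linarith
    nlinarith
  have hepos : (0:ℝ) < Real.exp 1 := Real.exp_pos 1
  have he1 : (1:ℝ) ≤ Real.exp 1 := by
    have := Real.add_one_le_exp 1
    linarith
  have hδpos : ∀ x ∈ Set.Icc a b, 0 < φ₂ x t - φ₁ x t := by
    intro x hx
    have := horder x hx t ht
    linarith
  -- lower and upper comparison with A t
  have hup : ∀ x ∈ Set.Icc a b, c * (φ₂ x t - φ₁ x t) ≤ A t := by
    intro x hx
    have h1 : ∀ y ∈ Set.Icc a b, c * (φ₂ x t - φ₁ x t) ≤ φ₂ y t - φ₁ y t := by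
      intro y hy
      have := hsemi t ht y hy x hx
      rwa [abs_of_pos (hδpos x hx), abs_of_pos (hδpos y hy)] at this
    have h2 := intervalIntegral.integral_mono_on hab.le
      (intervalIntegrable_const (c := c * (φ₂ x t - φ₁ x t))) (hδint t ht) h1
    rw [intervalIntegral.integral_const, smul_eq_mul] at h2
    have h3 : (b - a)⁻¹ * ((b - a) * (c * (φ₂ x t - φ₁ x t)))
        ≤ (b - a)⁻¹ * ∫ y in a..b, (φ₂ y t - φ₁ y t) :=
      mul_le_mul_of_nonneg_left h2 (by positivity)
    rw [← mul_assoc, inv_mul_cancel₀ habpos.ne', one_mul] at h3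
    exact h3
  have hlow : ∀ x ∈ Set.Icc a b, c * A t ≤ φ₂ x t - φ₁ x t := by
    intro x hx
    have h1 : ∀ y ∈ Set.Icc a b, c * (φ₂ y t - φ₁ y t) ≤ φ₂ x t - φ₁ x t := by
      intro y hy
      have := hsemi t ht x hx y hy
      rwa [abs_of_pos (hδpos x hx), abs_of_pos (hδpos y hy)] at this
    have h2 := intervalIntegral.integral_mono_on hab.le
      ((hδint t ht).const_mul c)
      (intervalIntegrable_const (c := φ₂ x t - φ₁ x t)) h1
    rw [intervalIntegral.integral_const, smul_eq_mul,
      intervalIntegral.integral_const_mul] at h2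
    have h3 : (b - a)⁻¹ * (c * ∫ y in a..b, (φ₂ y t - φ₁ y t))
        ≤ (b - a)⁻¹ * ((b - a) * (φ₂ x t - φ₁ x t)) :=
      mul_le_mul_of_nonneg_left h2 (by positivity)
    rw [← mul_assoc (b - a)⁻¹ (b - a), inv_mul_cancel₀ habpos.ne', one_mul] at h3
    calc c * A t = (b - a)⁻¹ * (c * ∫ y in a..b, (φ₂ y t - φ₁ y t)) := by rw [hA]; ring
      _ ≤ _ := h3
  -- pointwise bound on Ψ at the endpoints
  have hΨbound : ∀ x ∈ Set.Icc a b,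
      |Ψ x t| ≤ M * (A t / c) * (1 + -Real.log c) * -Real.log (A t) := by
    intro x hx
    set dx := φ₂ x t - φ₁ x t with hdx
    have hdxpos : 0 < dx := hδpos x hx
    have hdx_le : dx ≤ A t / c := by
      rw [le_div_iff₀ hc, hdx, mul_comm]
      exact hup x hx
    have hA_lt : A t < 1 / (2 * Real.exp 1) := by
      refine lt_of_lt_of_le hA1 ?_
      exact (div_le_div_iff_of_pos_right (by positivity)).mpr hc1
    have hA_le_inv_e : A t ≤ Real.exp (-1) := by
      rw [Real.exp_neg, inv_eq_one_div]
      have h1 : (1:ℝ)/(2*Real.exp 1) ≤ 1/Real.exp 1 :=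
        one_div_le_one_div_of_le hepos (by linarith)
      linarith
    have hlogA : Real.log (A t) ≤ -1 := by
      have := Real.log_le_log hA0 hA_le_inv_e
      rwa [Real.log_exp] at this
    have hdx_half : dx ≤ 1/2 := by
      have h1 : A t / c < c/(2*Real.exp 1)/c := (div_lt_div_iff_of_pos_right hc).mpr hA1
      have h2 : c/(2*Real.exp 1)/c = 1/(2*Real.exp 1) := by
        rw [div_div, mul_comm, ← div_div, div_self hc.ne']
      have h3 : (1:ℝ)/(2*Real.exp 1) ≤ 1/2 :=
        one_div_le_one_div_of_le two_pos (by linarith)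
      rw [h2] at h1
      linarith
    have hδA_low : c * A t ≤ dx := by rw [hdx]; exact hlow x hx
    have hcApos : 0 < c * A t := by positivity
    have hlogdx_nonpos : Real.log dx ≤ 0 := Real.log_nonpos hdxpos.le (by linarith)
    have hlog_dx_abs : |Real.log dx| = -Real.log dx := abs_of_nonpos hlogdx_nonpos
    have hlogdx_le : -Real.log dx ≤ -Real.log c - Real.log (A t) := by
      have h1 := Real.log_le_log hcApos hδA_low
      rw [Real.log_mul hc.ne' hA0.ne'] at h1
      linarith
    have hlogc_nonneg : 0 ≤ -Real.log c := by
      have := Real.log_nonpos hc.le hc1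
      linarith
    have hlogA_ge : 1 ≤ -Real.log (A t) := by linarith
    have hdistpos : 0 < dist (pt x (φ₂ x t)) (pt x (φ₁ x t)) := by
      rw [dist_pt, abs_of_pos hdxpos]
      exact hdxpos
    have hdisthalf : dist (pt x (φ₂ x t)) (pt x (φ₁ x t)) ≤ 1/2 := by
      rw [dist_pt, abs_of_pos hdxpos]
      exact hdx_half
    have hlip' := hlip t ht (pt x (φ₂ x t)) (pt x (φ₁ x t)) hdistpos hdisthalf
    rw [dist_pt, abs_of_pos hdxpos] at hlip'
    have e1 : dx * (-Real.log dx) ≤ (A t / c) * (-Real.log c - Real.log (A t)) := by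
      refine mul_le_mul hdx_le hlogdx_le (by linarith) (by positivity)
    have e2 : -Real.log c - Real.log (A t)
        ≤ (1 + -Real.log c) * (-Real.log (A t)) := by nlinarith
    have e3 : (A t / c) * (-Real.log c - Real.log (A t))
        ≤ (A t / c) * ((1 + -Real.log c) * (-Real.log (A t))) :=
      mul_le_mul_of_nonneg_left e2 (by positivity)
    calc |Ψ x t| ≤ M * dx * |Real.log dx| := hlip'
      _ = M * (dx * (-Real.log dx)) := by rw [hlog_dx_abs]; ring
      _ ≤ M * ((A t / c) * (-Real.log c - Real.log (A t))) :=
          mul_le_mul_of_nonneg_left e1 hM.le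
      _ ≤ M * ((A t / c) * ((1 + -Real.log c) * (-Real.log (A t)))) :=
          mul_le_mul_of_nonneg_left e3 hM.le
      _ = M * (A t / c) * (1 + -Real.log c) * -Real.log (A t) := by ring
  -- assemble
  have hlogA : Real.log (A t) ≤ -1 := by
    have hA_le_inv_e : A t ≤ Real.exp (-1) := by
      rw [Real.exp_neg, inv_eq_one_div]
      have h0 : A t < 1 / (2 * Real.exp 1) := by
        refine lt_of_lt_of_le hA1 ((div_le_div_iff_of_pos_right (by positivity)).mpr hc1)
      have h1 : (1:ℝ)/(2*Real.exp 1) ≤ 1/Real.exp 1 :=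
        one_div_le_one_div_of_le hepos (by linarith)
      linarith
    have := Real.log_le_log hA0 hA_le_inv_e
    rwa [Real.log_exp] at this
  have habsA : |Real.log (A t)| = -Real.log (A t) := abs_of_nonpos (by linarith)
  have hGbound : |G t| ≤ 2 * (M * (A t / c) * (1 + -Real.log c) * -Real.log (A t)) := by
    have hb' := hΨbound b (Set.right_mem_Icc.mpr hab.le)
    have ha' := hΨbound a (Set.left_mem_Icc.mpr hab.le)
    have : |G t| ≤ |Ψ b t| + |Ψ a t| := abs_sub _ _
    linarith
  rw [hAval, habsA, abs_mul, abs_of_pos (inv_pos.mpr habpos)]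
  have hfinal : 2 * (1 + -Real.log c) / c * M / (b - a) * A t * -Real.log (A t)
      = (b - a)⁻¹ * (2 * (M * (A t / c) * (1 + -Real.log c) * -Real.log (A t))) := by
    field_simp
  rw [hfinal]
  exact mul_le_mul_of_nonneg_left hGbound (by positivity)
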